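/- Correctness of the reduction showing fallback voting resistant to constructive control by partition of candidates (without run-off) in model TP: let (C,V) be the fallback voting election obtained by Construction 1 from a Hitting Set instance (B,S,k). Then S has a hitting set of size at most k if and only if there exists a partition of C into disjoint sets C1 and C2 such that w is the unique FV winner of the final-round election (W1 ∪ C2, V), where W1 denotes the set of FV winners of the subelection (C1, V). -/

import Mathlib

/-!
In every election `(C', V)` with `c ∈ C'`, the FV winner is unique: it is `w` if `d, w ∈ C'` and
`C' ∩ B` is a hitting set of size at most `k`, and `c` otherwise. Without `w`, candidate `c` has a
strict majority at level 1. Without `d`, `c` wins at level 1 or at level 2, where it collects the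
`c | …`, `c w | …`, `w c | …` and `d w c | …` voters. With `c, d, w` all present nobody has a
level-1 majority; at level 2 each `S_i` missed by `C'` gives `c` another `2(k+1)` points and each
`b_j ∉ C'` gives `w` two points, so `w` overtakes `c` exactly when `C' ∩ B` is a small hitting set.

If `c` reaches the final round, `w` wins there; otherwise `c` lost in `(C1, V)`, which was then won
by `w`. Either way the hitting set can be read off. Conversely, for a hitting set `B'` the partition
`C1 = {c} ∪ (B - B')` leaves `c` as the only first-round winner and the final round
`{c, d, w} ∪ B'` is won by `w`.
-/

/-!
Fallback voting (Brams and Sanver).  A vote is represented by the list of the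
candidates the voter approves of, in order of preference (most preferred
first); all candidates not occurring in the list are disapproved.  The voter
collection is a multiset of such votes.
-/

namespace FV

variable {α : Type} [DecidableEq α]

/-- The level-`i` score of candidate `c` in the election with votes `V`:
the number of voters who approve of `c` and rank `c` among their top `i`
approved candidates. -/
def levelScore (V : Multiset (List α)) (i : ℕ) (c : α) : ℕ :=
  (V.filter (fun v => c ∈ v.take i)).card

/-- The approval score of candidate `c`: the number of voters approving of `c`. -/
def apprScore (V : Multiset (List α)) (c : α) : ℕ :=
  (V.filter (fun v => c ∈ v)).card

/-- Restriction of the votes to the candidate set `C`: each voter's approval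
set and ranking are restricted to `C`. -/
def restrict (C : Finset α) (V : Multiset (List α)) : Multiset (List α) :=
  V.map (fun v => v.filter (fun x => decide (x ∈ C)))

instance instDecMaj (C : Finset α) (V : Multiset (List α)) :
    DecidablePred (fun i =>
      i ∈ Finset.Icc 1 C.card ∧ ∃ c ∈ C, 2 * levelScore V i c > Multiset.card V) :=
  fun _ => inferInstance

/-- The set of fallback-voting winners of the election `(C,V)`:
if some level `i` with `1 ≤ i ≤ ‖C‖` exists at which some candidate of `C`
has a strict majority (level-`i` score exceeding `‖V‖/2`), then the winners
are the candidates with the largest level-`i₀` score, where `i₀` is the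
smallest such level; otherwise the winners are the candidates with the largest
approval score. -/
def winners (C : Finset α) (V : Multiset (List α)) : Finset α :=
  if h : ∃ i, i ∈ Finset.Icc 1 C.card ∧ ∃ c ∈ C, 2 * levelScore V i c > Multiset.card V then
    C.filter (fun c => ∀ d ∈ C, levelScore V (Nat.find h) d ≤ levelScore V (Nat.find h) c)
  else
    C.filter (fun c => ∀ d ∈ C, apprScore V d ≤ apprScore V c)

/-- The FV winners of the election `(C,V)` restricted to the candidate set `C`. -/
def fwinners (C : Finset α) (V : Multiset (List α)) : Finset α :=
  winners C (restrict C V)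

end FV

/-! ### Construction 1 from a Hitting Set instance `(B, S, k)` -/

/-- Candidates of Construction 1: the elements of `B = {b_0, …, b_{m-1}}`
together with the three candidates `c`, `d`, and `w`. -/
inductive CandA (m : ℕ) where
  | b (j : Fin m)
  | c
  | d
  | w
deriving DecidableEq

/-- The elements of a subset `T ⊆ B`, ranked according to the fixed linear
order on `B`. -/
def blistA {m : ℕ} (T : Finset (Fin m)) : List (CandA m) :=
  (T.sort (· ≤ ·)).map CandA.b

/-- The candidate set `C = B ∪ {c, d, w}` of Construction 1. -/
def CA (m : ℕ) : Finset (CandA m) :=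
  (Finset.univ : Finset (Fin m)).image CandA.b ∪ {CandA.c, CandA.d, CandA.w}

/-- The voter collection of Construction 1:
`2m+1` voters `c | B∪{d,w}`; `2n+2k(n−1)+3` voters `c w | B∪{d}`;
`2n(k+1)+5` voters `w c | B∪{d}`; for each `i`, `2(k+1)` voters
`d S_i c | (B−S_i)∪{w}`; for each `j`, two voters `d b_j w | (B−{b_j})∪{c}`;
and `2(k+1)` voters `d w c | B`. -/
def VA (m n k : ℕ) (S : Fin n → Finset (Fin m)) : Multiset (List (CandA m)) :=
  Multiset.replicate (2*m+1) [CandA.c] +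
  Multiset.replicate (2*n + 2*k*(n-1) + 3) [CandA.c, CandA.w] +
  Multiset.replicate (2*n*(k+1) + 5) [CandA.w, CandA.c] +
  (∑ i : Fin n, Multiset.replicate (2*(k+1)) ([CandA.d] ++ blistA (S i) ++ [CandA.c])) +
  (∑ j : Fin m, Multiset.replicate 2 [CandA.d, CandA.b j, CandA.w]) +
  Multiset.replicate (2*(k+1)) [CandA.d, CandA.w, CandA.c]


namespace Multiset

variable {α : Type*}

theorem countP_replicate (p : α → Prop) [DecidablePred p] (r : ℕ) (a : α) :
    (replicate r a).countP p = if p a then r else 0 := by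
  rw [← coe_replicate, coe_countP, List.countP_replicate]
  simp only [decide_eq_true_eq]

theorem countP_finset_sum {ι : Type*} (p : α → Prop) [DecidablePred p] (s : Finset ι)
    (f : ι → Multiset α) : (∑ i ∈ s, f i).countP p = ∑ i ∈ s, (f i).countP p :=
  map_sum (countPAddMonoidHom p) f s

end Multiset

theorem List.mem_take_one_append_singleton {α : Type*} {L : List α} {a x : α} :
    x ∈ (L ++ [a]).take 1 ↔ L.head? = some x ∨ L = [] ∧ x = a := by
  cases L <;> simp [eq_comm]

namespace FV

variable {α : Type} [DecidableEq α]

theorem levelScore_eq_countP (V : Multiset (List α)) (i : ℕ) (x : α) :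
    levelScore V i x = V.countP (fun v => x ∈ v.take i) :=
  (Multiset.countP_eq_card_filter _ _).symm

theorem apprScore_eq_countP (V : Multiset (List α)) (x : α) :
    apprScore V x = V.countP (fun v => x ∈ v) :=
  (Multiset.countP_eq_card_filter _ _).symm

theorem levelScore_restrict (C : Finset α) (V : Multiset (List α)) (i : ℕ) (x : α) :
    levelScore (restrict C V) i x = V.countP (fun v => x ∈ (v.filter (· ∈ C)).take i) := by
  rw [levelScore, restrict, Multiset.filter_map, Multiset.card_map,
    ← Multiset.countP_eq_card_filter]
  rfl

theorem card_restrict (C : Finset α) (V : Multiset (List α)) :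
    Multiset.card (restrict C V) = Multiset.card V :=
  Multiset.card_map _ _

theorem levelScore_restrict_le_apprScore (C : Finset α) (V : Multiset (List α)) (i : ℕ)
    (x : α) : levelScore (restrict C V) i x ≤ apprScore V x := by
  rw [levelScore_restrict, apprScore_eq_countP, Multiset.countP_eq_card_filter,
    Multiset.countP_eq_card_filter]
  exact Multiset.card_le_card <| Multiset.monotone_filter_right _
    fun v hv => List.mem_of_mem_filter (List.take_subset _ _ hv)

theorem levelScore_one_add_levelScore_one_le {x y : α} (hxy : x ≠ y) (V : Multiset (List α)) :
    levelScore V 1 x + levelScore V 1 y ≤ Multiset.card V := by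
  rw [Multiset.card_eq_countP_add_countP (fun v => x ∈ v.take 1), levelScore_eq_countP,
    levelScore_eq_countP, Multiset.countP_eq_card_filter, Multiset.countP_eq_card_filter,
    Multiset.countP_eq_card_filter]
  refine Nat.add_le_add_left (Multiset.card_le_card <| Multiset.monotone_filter_right _ ?_) _
  intro v hy hx
  rw [List.take_one] at hx hy
  cases h : v.head? <;> simp_all

theorem winners_eq_singleton_of_first_majority {C : Finset α} {V : Multiset (List α)}
    {i : ℕ} {c : α} (hi : 1 ≤ i) (hiC : i ≤ C.card) (hc : c ∈ C)
    (hmaj : Multiset.card V < 2 * levelScore V i c)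
    (hbelow : ∀ j, 0 < j → j < i → ∀ x ∈ C, 2 * levelScore V j x ≤ Multiset.card V)
    (hlt : ∀ x ∈ C, x ≠ c → levelScore V i x < levelScore V i c) :
    winners C V = {c} := by
  have h : ∃ i, i ∈ Finset.Icc 1 C.card ∧ ∃ c ∈ C, 2 * levelScore V i c > Multiset.card V :=
    ⟨i, Finset.mem_Icc.2 ⟨hi, hiC⟩, c, hc, hmaj⟩
  have hfind : Nat.find h = i := by
    refine (Nat.find_eq_iff h).2 ⟨⟨Finset.mem_Icc.2 ⟨hi, hiC⟩, c, hc, hmaj⟩, ?_⟩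
    rintro j hj ⟨hj1, x, hx, hxmaj⟩
    exact absurd (hbelow j (Finset.mem_Icc.1 hj1).1 hj x hx) (not_le.2 hxmaj)
  rw [winners, dif_pos h, hfind]
  ext x
  simp only [Finset.mem_filter, Finset.mem_singleton]
  constructor
  · rintro ⟨hx, hmax⟩
    by_contra hne
    exact absurd (hmax c hc) (not_le.2 (hlt x hx hne))
  · rintro rfl
    exact ⟨hc, fun y hy => if hyx : y = x then hyx ▸ le_rfl else (hlt y hy hyx).le⟩

theorem winners_eq_singleton_of_levelOne_majority {C : Finset α} {V : Multiset (List α)} {c : α}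
    (hc : c ∈ C) (hmaj : Multiset.card V < 2 * levelScore V 1 c) : winners C V = {c} :=
  winners_eq_singleton_of_first_majority le_rfl (Finset.card_pos.2 ⟨c, hc⟩) hc hmaj
    (fun _ _ h1 => absurd h1 (by omega))
    fun x _ hxc => by have := levelScore_one_add_levelScore_one_le hxc V; omega

end FV

namespace Construction1

open FV CandA

variable {m n k : ℕ} {S : Fin n → Finset (Fin m)} {C' : Finset (CandA m)}

/-- The voter-group sizes of Construction 1 as linear forms in `n * k`, for `omega`. -/
theorem size_identities (hn : 1 < n) :
    2*k*(n-1) + 2*k = 2*(n*k) ∧ 2*n*(k+1) = 2*(n*k) + 2*n ∧ 2*(k+1)*n = 2*(n*k) + 2*n ∧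
      6*n*(k+1) = 6*(n*k) + 6*n ∧ 2*k ≤ n*k := by
  obtain ⟨n, rfl⟩ : ∃ n', n = n' + 1 := ⟨n - 1, by omega⟩
  refine ⟨?_, by ring, by ring, by ring, Nat.mul_le_mul_right k hn⟩
  rw [Nat.add_sub_cancel]
  ring

def bPart (C' : Finset (CandA m)) : Finset (Fin m) :=
  Finset.univ.filter (fun j => b j ∈ C')

theorem mem_bPart {j : Fin m} : j ∈ bPart C' ↔ b j ∈ C' := by
  simp [bPart]

theorem mem_blistA {T : Finset (Fin m)} {y : CandA m} : y ∈ blistA T ↔ ∃ j ∈ T, b j = y := by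
  simp [blistA]

theorem countP_VA (p : List (CandA m) → Prop) [DecidablePred p] :
    (VA m n k S).countP p =
      (if p [c] then 2*m+1 else 0) + (if p [c, w] then 2*n + 2*k*(n-1) + 3 else 0) +
      (if p [w, c] then 2*n*(k+1) + 5 else 0) +
      2*(k+1) * (Finset.univ.filter (fun i => p ([d] ++ blistA (S i) ++ [c]))).card +
      2 * (Finset.univ.filter (fun j => p [d, b j, w])).card +
      (if p [d, w, c] then 2*(k+1) else 0) := by
  simp only [VA, Multiset.countP_add, Multiset.countP_finset_sum, Multiset.countP_replicate,
    ← Finset.sum_filter, Finset.sum_const, smul_eq_mul, mul_comm]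

theorem card_VA (hn : 1 < n) : Multiset.card (VA m n k S) = 6*n*(k+1) + 4*m + 11 := by
  rw [← Multiset.countP_True, countP_VA]
  have := size_identities (k := k) hn
  simp only [if_true, Finset.filter_true, Finset.card_univ, Fintype.card_fin]
  omega

theorem apprScore_VA_d : apprScore (VA m n k S) d = 2*(k+1)*n + 2*m + 2*(k+1) := by
  rw [apprScore_eq_countP, countP_VA]
  simp

theorem apprScore_VA_w :
    apprScore (VA m n k S) w = (2*n + 2*k*(n-1) + 3) + (2*n*(k+1) + 5) + 2*m + 2*(k+1) := by
  rw [apprScore_eq_countP, countP_VA]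
  simp [mem_blistA]

theorem apprScore_VA_b_le (j : Fin m) : apprScore (VA m n k S) (b j) ≤ 2*(k+1)*n + 2 := by
  rw [apprScore_eq_countP, countP_VA]
  have hsets := Finset.card_filter_le Finset.univ fun i => b j ∈ [d] ++ blistA (S i) ++ [c]
  have hj : (Finset.univ.filter fun j' => b j ∈ [d, b j', w]).card = 1 := by
    simp [Finset.filter_eq]
  rw [Finset.card_univ, Fintype.card_fin] at hsets
  rw [hj]
  simp only [reduceCtorEq, List.mem_cons, List.not_mem_nil, or_false, if_false]
  have := Nat.mul_le_mul_left (2*(k+1)) hsets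
  omega

theorem c_mem_take_two_filter_iff {T : Finset (Fin m)} (hc : c ∈ C') (hd : d ∈ C') :
    c ∈ (([d] ++ blistA T ++ [c]).filter (· ∈ C')).take 2 ↔ bPart C' ∩ T = ∅ := by
  have hhead : ((blistA T).filter (· ∈ C')).head? ≠ some c := fun h => by
    simpa [mem_blistA] using List.mem_of_mem_filter (List.mem_of_mem_head? h)
  rw [List.append_assoc, List.singleton_append, List.filter_cons_of_pos (by simpa using hd),
    List.take_succ_cons, List.mem_cons, List.filter_append, List.filter_singleton,
    decide_eq_true hc, cond_true, List.mem_take_one_append_singleton]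
  simp only [reduceCtorEq, hhead, false_or, and_true, List.filter_eq_nil_iff]
  simp [mem_blistA, Finset.eq_empty_iff_forall_notMem, mem_bPart]
  tauto

theorem w_mem_take_two_filter_iff {j : Fin m} (hd : d ∈ C') (hw : w ∈ C') :
    w ∈ ([d, b j, w].filter (· ∈ C')).take 2 ↔ b j ∉ C' := by
  by_cases hb : b j ∈ C' <;> simp [hb, hd, hw]

theorem w_not_mem_take_filter (T : Finset (Fin m)) (i : ℕ) :
    w ∉ (([d] ++ blistA T ++ [c]).filter (· ∈ C')).take i := fun h => by
  simpa [mem_blistA] using List.mem_of_mem_filter (List.mem_of_mem_take h)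

theorem c_not_mem_take_filter (j : Fin m) (i : ℕ) :
    c ∉ ([d, b j, w].filter (· ∈ C')).take i := fun h => by
  simpa using List.mem_of_mem_filter (List.mem_of_mem_take h)

theorem levelScore_one_c_ge (hc : c ∈ C') (hw : w ∉ C') :
    (2*m+1) + (2*n + 2*k*(n-1) + 3) + (2*n*(k+1) + 5) ≤
      levelScore (restrict C' (VA m n k S)) 1 c := by
  rw [levelScore_restrict, countP_VA]
  simp [hc, hw, add_assoc]

theorem levelScore_one_c (hc : c ∈ C') (hd : d ∈ C') (hw : w ∈ C') :
    levelScore (restrict C' (VA m n k S)) 1 c = (2*m+1) + (2*n + 2*k*(n-1) + 3) := by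
  rw [levelScore_restrict, countP_VA]
  simp [hc, hd, hw, List.filter_cons]

theorem levelScore_one_w_le (hc : c ∈ C') :
    levelScore (restrict C' (VA m n k S)) 1 w ≤ (2*n*(k+1) + 5) + 2*m + 2*(k+1) := by
  rw [levelScore_restrict, countP_VA]
  simp only [w_not_mem_take_filter, hc, decide_true, List.filter_cons_of_pos, List.filter_nil,
    List.take_succ_cons, List.take_nil, List.mem_cons, reduceCtorEq, List.not_mem_nil, or_self,
    ↓reduceIte, List.filter_cons, decide_eq_true_eq, List.take_zero, add_zero, zero_add,
    Finset.filter_false, Finset.card_empty, mul_zero]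
  gcongr ?_ + 2 * ?_ + ?_
  · split_ifs <;> omega
  · exact (Finset.card_le_univ _).trans (Fintype.card_fin m).le
  · split_ifs <;> omega

theorem levelScore_two_c_ge (hc : c ∈ C') (hd : d ∉ C') (hw : w ∈ C') :
    (2*m+1) + (2*n + 2*k*(n-1) + 3) + (2*n*(k+1) + 5) + 2*(k+1) ≤
      levelScore (restrict C' (VA m n k S)) 2 c := by
  rw [levelScore_restrict, countP_VA]
  simp [hc, hd, hw, List.filter_cons]
  omega

theorem levelScore_two_c (hc : c ∈ C') (hd : d ∈ C') (hw : w ∈ C') :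
    levelScore (restrict C' (VA m n k S)) 2 c = (2*m+1) + (2*n + 2*k*(n-1) + 3) +
      (2*n*(k+1) + 5) + 2*(k+1) * (Finset.univ.filter fun i => bPart C' ∩ S i = ∅).card := by
  rw [levelScore_restrict, countP_VA]
  simp only [c_mem_take_two_filter_iff hc hd, c_not_mem_take_filter]
  simp [hc, hd, hw]

theorem levelScore_two_w (hc : c ∈ C') (hd : d ∈ C') (hw : w ∈ C') :
    levelScore (restrict C' (VA m n k S)) 2 w = (2*n + 2*k*(n-1) + 3) + (2*n*(k+1) + 5) +
      2 * (Finset.univ.filter fun j => b j ∉ C').card + 2*(k+1) := by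
  rw [levelScore_restrict, countP_VA]
  simp only [w_mem_take_two_filter_iff hd hw, w_not_mem_take_filter]
  simp [hc, hd, hw]

theorem card_bPart_add_card_filter_not_mem :
    (bPart C').card + (Finset.univ.filter fun j => b j ∉ C').card = m := by
  rw [bPart, Finset.card_filter_add_card_filter_not, Finset.card_univ, Fintype.card_fin]

theorem levelScore_restrict_VA_le_of_ne {x : CandA m} (i : ℕ) (hxc : x ≠ c) (hxw : x ≠ w) :
    levelScore (restrict C' (VA m n k S)) i x ≤ 2*(k+1)*n + 2*m + 2*(k+1) := by
  refine (levelScore_restrict_le_apprScore C' _ i x).trans ?_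
  cases x with
  | b j => have := apprScore_VA_b_le (k := k) (S := S) j; omega
  | c => exact absurd rfl hxc
  | d => exact apprScore_VA_d.le
  | w => exact absurd rfl hxw

theorem fwinners_VA_of_w_not_mem (hn : 1 < n) (hc : c ∈ C') (hw : w ∉ C') :
    fwinners C' (VA m n k S) = {c} := by
  refine winners_eq_singleton_of_levelOne_majority hc ?_
  have := levelScore_one_c_ge (k := k) (S := S) hc hw
  have := size_identities (k := k) hn
  rw [card_restrict, card_VA hn]
  omega

theorem fwinners_VA_of_d_not_mem (hn : 1 < n) (hc : c ∈ C') (hd : d ∉ C') :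
    fwinners C' (VA m n k S) = {c} := by
  by_cases hw : w ∈ C'
  swap
  · exact fwinners_VA_of_w_not_mem hn hc hw
  by_cases h1 : Multiset.card (restrict C' (VA m n k S)) <
      2 * levelScore (restrict C' (VA m n k S)) 1 c
  · exact winners_eq_singleton_of_levelOne_majority hc h1
  have hN := (card_restrict C' _).trans (card_VA (k := k) (S := S) hn)
  have := size_identities (k := k) hn
  have hc2 := levelScore_two_c_ge (k := k) (S := S) hc hd hw
  have hw1 := levelScore_one_w_le (k := k) (S := S) hc
  have hw2 := (levelScore_restrict_le_apprScore C' _ 2 w).trans_eq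
    (apprScore_VA_w (k := k) (S := S))
  have hminor (i : ℕ) {x : CandA m} (hxc : x ≠ c) (hxw : x ≠ w) :
      levelScore (restrict C' (VA m n k S)) i x ≤ 2*(k+1)*n + 2*m + 2*(k+1) :=
    levelScore_restrict_VA_le_of_ne i hxc hxw
  refine winners_eq_singleton_of_first_majority one_le_two
    (Finset.one_lt_card.2 ⟨c, hc, w, hw, by simp⟩) hc (by omega) ?_ ?_
  · intro j hj0 hj2 x _
    obtain rfl : j = 1 := by omega
    rcases eq_or_ne x c with rfl | hxc
    · omega
    rcases eq_or_ne x w with rfl | hxw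
    · omega
    have := hminor 1 hxc hxw
    omega
  · intro x _ hxc
    rcases eq_or_ne x w with rfl | hxw
    · omega
    have := hminor 2 hxc hxw
    omega

theorem fwinners_VA_of_cdw_mem (hn : 1 < n) (hc : c ∈ C') (hd : d ∈ C') (hw : w ∈ C') :
    fwinners C' (VA m n k S) =
      if (bPart C').card ≤ k ∧ ∀ i, (bPart C' ∩ S i).Nonempty then {w} else {c} := by
  have hN := (card_restrict C' _).trans (card_VA (k := k) (S := S) hn)
  have := size_identities (k := k) hn
  have hc1 := levelScore_one_c (k := k) (S := S) hc hd hw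
  have hw1 := levelScore_one_w_le (k := k) (S := S) hc
  have hc2 := levelScore_two_c (k := k) (S := S) hc hd hw
  have hw2 := levelScore_two_w (k := k) (S := S) hc hd hw
  have ht := card_bPart_add_card_filter_not_mem (C' := C')
  have hcard : 2 ≤ C'.card := Finset.one_lt_card.2 ⟨c, hc, w, hw, by simp⟩
  have hminor (i : ℕ) {x : CandA m} (hxc : x ≠ c) (hxw : x ≠ w) :
      levelScore (restrict C' (VA m n k S)) i x ≤ 2*(k+1)*n + 2*m + 2*(k+1) :=
    levelScore_restrict_VA_le_of_ne i hxc hxw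
  have hbelow : ∀ j, 0 < j → j < 2 → ∀ x ∈ C',
      2 * levelScore (restrict C' (VA m n k S)) j x ≤ Multiset.card (restrict C' (VA m n k S)) := by
    intro j hj0 hj2 x _
    obtain rfl : j = 1 := by omega
    rcases eq_or_ne x c with rfl | hxc
    · omega
    rcases eq_or_ne x w with rfl | hxw
    · omega
    have := hminor 1 hxc hxw
    omega
  split_ifs with hhit
  · obtain ⟨hk, hall⟩ := hhit
    have hu : (Finset.univ.filter fun i => bPart C' ∩ S i = ∅).card = 0 := by
      simp [Finset.nonempty_iff_ne_empty.1 (hall _)]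
    rw [hu, mul_zero] at hc2
    refine winners_eq_singleton_of_first_majority one_le_two hcard hw (by omega) hbelow ?_
    intro x _ hxw
    rcases eq_or_ne x c with rfl | hxc
    · omega
    have := hminor 2 hxc hxw
    omega
  · refine winners_eq_singleton_of_first_majority one_le_two hcard hc (by omega) hbelow ?_
    intro x _ hxc
    rcases eq_or_ne x w with rfl | hxw
    · rcases not_and_or.1 hhit with hk | hunhit
      · omega
      obtain ⟨i, hi⟩ := not_forall.1 hunhit
      have : 0 < (Finset.univ.filter fun i => bPart C' ∩ S i = ∅).card :=
        Finset.card_pos.2 ⟨i, by simpa [Finset.not_nonempty_iff_eq_empty] using hi⟩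
      have := Nat.mul_le_mul_left (2*(k+1)) this
      omega
    have := hminor 2 hxc hxw
    omega

theorem fwinners_VA (hn : 1 < n) (hc : c ∈ C') :
    fwinners C' (VA m n k S) =
      if d ∈ C' ∧ w ∈ C' ∧ (bPart C').card ≤ k ∧ ∀ i, (bPart C' ∩ S i).Nonempty
      then {w} else {c} := by
  by_cases hd : d ∈ C'
  · by_cases hw : w ∈ C'
    · simpa only [hd, hw, true_and] using fwinners_VA_of_cdw_mem hn hc hd hw
    · simpa only [hw, false_and, and_false, if_false] using fwinners_VA_of_w_not_mem hn hc hw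
  · simpa only [hd, false_and, if_false] using fwinners_VA_of_d_not_mem hn hc hd

end Construction1

open Construction1 CandA

theorem fv_construction1_constructive_partition_TP_general
    (m n k : ℕ) (S : Fin n → Finset (Fin m))
    (hn : 1 < n) :
    (∃ B' : Finset (Fin m), B'.card ≤ k ∧ ∀ i, (B' ∩ S i).Nonempty) ↔
    (∃ C1 C2 : Finset (CandA m), Disjoint C1 C2 ∧ C1 ∪ C2 = CA m ∧
      FV.fwinners (FV.fwinners C1 (VA m n k S) ∪ C2) (VA m n k S) = {CandA.w}) := by
  constructor
  · rintro ⟨B', hB'⟩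
    refine ⟨insert c (B'ᶜ.image b), {d, w} ∪ B'.image b, ?_, ?_, ?_⟩
    · simp [Finset.disjoint_left]
    · ext x
      cases x <;> simp [CA, em']
    · have hF : bPart ({c} ∪ ({d, w} ∪ B'.image b)) = B' := by
        ext j
        simp [mem_bPart]
      rw [fwinners_VA hn (Finset.mem_insert_self _ _), if_neg (by simp),
        fwinners_VA hn (by simp), if_pos ⟨by simp, by simp, by rwa [hF]⟩]
  · rintro ⟨C1, C2, -, hCA, hwin⟩
    by_cases hcF : c ∈ FV.fwinners C1 (VA m n k S) ∪ C2
    · rw [fwinners_VA hn hcF] at hwin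
      split_ifs at hwin with hcond
      · exact ⟨_, hcond.2.2⟩
      · simp at hwin
    · have hc1 : c ∈ C1 := (Finset.mem_union.1 (hCA ▸ by simp [CA])).resolve_right
        fun h => hcF (Finset.mem_union_right _ h)
      have hW1 := fwinners_VA (k := k) (S := S) hn hc1
      split_ifs at hW1 with hcond
      · exact ⟨_, hcond.2.2⟩
      · exact absurd (Finset.mem_union_left _ (hW1 ▸ Finset.mem_singleton_self c)) hcF

/-- Correctness of the reduction showing fallback voting resistant to
constructive control by partition of candidates (without run-off) in model
TP: for the election `(C,V)` of Construction 1 from a Hitting Set instance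
`(B,S,k)` (with `n > 1`, `0 < k < m`, and all `S_i` nonempty), `S` has a
hitting set of size at most `k` if and only if `C` can be partitioned into
disjoint `C1` and `C2` such that `w` is the unique FV winner of the final
round `(W1 ∪ C2, V)`, where `W1` is the FV winner set of the subelection
`(C1,V)`. -/
theorem fv_construction1_constructive_partition_TP
    (m n k : ℕ) (S : Fin n → Finset (Fin m))
    (hn : 1 < n) (hk : 0 < k) (hkm : k < m) (hS : ∀ i, (S i).Nonempty) :
    (∃ B' : Finset (Fin m), B'.card ≤ k ∧ ∀ i, (B' ∩ S i).Nonempty) ↔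
    (∃ C1 C2 : Finset (CandA m), Disjoint C1 C2 ∧ C1 ∪ C2 = CA m ∧
      FV.fwinners (FV.fwinners C1 (VA m n k S) ∪ C2) (VA m n k S) = {CandA.w}) :=
  fv_construction1_constructive_partition_TP_general m n k S hn
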